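/- arXiv:math-ph/0503061 — 3 statements merged into one kernel-verified Lean document; each statement's English description precedes it below -/
import Mathlib

section
/- Let H be a self-adjoint operator on a finite-dimensional Hilbert space, E ∈ ℝ, η > 0, and J = [E−η, E+η]. Then (tr χ_J(H))² − tr χ_J(H) ≤ (2η)² [ (tr Im R)² − tr((Im R)²) ], where R = (H − (E+iη))⁻¹ and Im R = (R − R*)/(2i). -/
/-!
Diagonalise `H = U diag(λ) U*`. Then `Im R = U diag(f) U*` with the Lorentzian weights
`f i = η / ((λ i - E)² + η²) > 0`, so `(tr Im R)² - tr (Im R)² = ∑_{i ≠ j} f i f j`.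
Each eigenvalue in `[E - η, E + η]` has `2η f i ≥ 1`, so the ordered pairs of distinct such
eigenvalues already contribute at least `N² - N` to `(2η)² ∑_{i ≠ j} f i f j`.
-/

open Matrix Complex

namespace Finset

variable {ι R : Type*} [DecidableEq ι]

theorem sum_offDiag_mul [CommRing R] (s : Finset ι) (f : ι → R) :
    ∑ x ∈ s.offDiag, f x.1 * f x.2 = (∑ i ∈ s, f i) ^ 2 - ∑ i ∈ s, f i ^ 2 := by
  rw [sq, sum_mul_sum, ← sum_product', ← diag_union_offDiag,
    sum_union (disjoint_diag_offDiag s), sum_diag]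
  simp only [sq, add_sub_cancel_left]

theorem card_sq_sub_card_le_sq_sum_sub_sum_sq [CommRing R] [LinearOrder R] [IsStrictOrderedRing R]
    {s T : Finset ι} (hTs : T ⊆ s) {f : ι → R} (hf : ∀ i ∈ s, 0 ≤ f i) {c : R}
    (hT : ∀ i ∈ T, 1 ≤ c * f i) :
    (#T : R) ^ 2 - #T ≤ c ^ 2 * ((∑ i ∈ s, f i) ^ 2 - ∑ i ∈ s, f i ^ 2) := by
  calc (#T : R) ^ 2 - #T = ∑ _x ∈ T.offDiag, (1 : R) := by
        rw [sum_const, nsmul_one, offDiag_card, Nat.cast_sub (Nat.le_mul_self _), Nat.cast_mul, sq]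
    _ ≤ ∑ x ∈ T.offDiag, c * f x.1 * (c * f x.2) := sum_le_sum fun x hx => by
        rw [mem_offDiag] at hx
        exact one_le_mul_of_one_le_of_one_le (hT _ hx.1) (hT _ hx.2.1)
    _ ≤ ∑ x ∈ s.offDiag, c * f x.1 * (c * f x.2) :=
        sum_le_sum_of_subset_of_nonneg (offDiag_mono hTs) fun x hx _ => by
          rw [mem_offDiag] at hx
          rw [mul_mul_mul_comm, ← sq]
          exact mul_nonneg (sq_nonneg c) (mul_nonneg (hf _ hx.1) (hf _ hx.2.1))
    _ = c ^ 2 * ((∑ i ∈ s, f i) ^ 2 - ∑ i ∈ s, f i ^ 2) := by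
        rw [sum_offDiag_mul s (c * f ·)]
        simp only [mul_pow, ← mul_sum]
        ring

end Finset

namespace Matrix

variable {n : Type*} [Fintype n] [DecidableEq n]

theorem trace_conjStarAlgAut {R : Type*} [CommSemiring R] [StarRing R]
    (u : unitary (Matrix n n R)) (A : Matrix n n R) :
    (Unitary.conjStarAlgAut R _ u A).trace = A.trace := by
  rw [Unitary.conjStarAlgAut_apply, trace_mul_cycle, Unitary.coe_star_mul_self, one_mul]

theorem IsHermitian.inv_sub_smul_one {𝕜 : Type*} [RCLike 𝕜] {H : Matrix n n 𝕜}
    (hH : H.IsHermitian) {z : 𝕜} (hz : ∀ i, (hH.eigenvalues i : 𝕜) ≠ z) :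
    (H - z • 1)⁻¹ = Unitary.conjStarAlgAut 𝕜 _ hH.eigenvectorUnitary
      (diagonal fun i => ((hH.eigenvalues i : 𝕜) - z)⁻¹) := by
  have hsub : H - z • 1 = Unitary.conjStarAlgAut 𝕜 _ hH.eigenvectorUnitary
      (diagonal fun i => (hH.eigenvalues i : 𝕜) - z) := by
    rw [← diagonal_sub, ← smul_one_eq_diagonal, map_sub, map_smul, map_one]
    exact congrArg (· - z • 1) hH.spectral_theorem
  rw [hsub]
  refine inv_eq_right_inv ?_
  rw [← map_mul, diagonal_mul_diagonal]
  simp only [mul_inv_cancel₀ (sub_ne_zero.mpr (hz _)), diagonal_one, map_one]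

theorem conjStarAlgAut_diagonal_ofReal_im (u : unitary (Matrix n n ℂ)) (d : n → ℂ) :
    Unitary.conjStarAlgAut ℂ _ u (diagonal fun i => ((d i).im : ℂ)) =
      (2 * I)⁻¹ • (Unitary.conjStarAlgAut ℂ _ u (diagonal d) -
        (Unitary.conjStarAlgAut ℂ _ u (diagonal d))ᴴ) := by
  rw [← star_eq_conjTranspose, ← map_star, ← map_sub, ← map_smul, star_eq_conjTranspose,
    diagonal_conjTranspose, diagonal_sub, ← diagonal_smul]
  congr 2
  ext i
  rw [im_eq_sub_conj, Pi.smul_apply, smul_eq_mul, Pi.star_apply, Complex.star_def, div_eq_inv_mul]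

end Matrix

theorem Complex.im_inv_ofReal_sub (x E η : ℝ) :
    ((x : ℂ) - (E + η * I))⁻¹.im = η / ((x - E) ^ 2 + η ^ 2) := by
  rw [inv_im, normSq_apply]
  simp only [sub_re, sub_im, add_re, add_im, ofReal_re, ofReal_im, re_ofReal_mul, im_ofReal_mul,
    I_re, I_im]
  ring

/-- For a Hermitian matrix `H` on a finite-dimensional Hilbert space ℂⁿ,
with `J = [E-η, E+η]`, the number of eigenvalues in `J` (with multiplicity), i.e.
`tr χ_J(H)`, satisfies `(tr χ_J(H))² - tr χ_J(H) ≤ (2η)² [(tr Im R)² - tr((Im R)²)]`,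
where `R = (H - (E+iη))⁻¹` and `Im R = (R - R*)/(2i)`. -/
theorem stmt_2 {n : Type*} [Fintype n] [DecidableEq n]
    (H : Matrix n n ℂ) (hH : H.IsHermitian) (E η : ℝ) (hη : 0 < η)
    (R ImR : Matrix n n ℂ)
    (hR : R = (H - ((E : ℂ) + (η : ℂ) * Complex.I) • (1 : Matrix n n ℂ))⁻¹)
    (hImR : ImR = (2 * Complex.I)⁻¹ • (R - Rᴴ))
    (N : ℕ)
    (hN : N = (Finset.univ.filter
      (fun i => hH.eigenvalues i ∈ Set.Icc (E - η) (E + η))).card) :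
    (N : ℝ) ^ 2 - (N : ℝ) ≤
      (2 * η) ^ 2 * (((ImR.trace).re) ^ 2 - ((ImR * ImR).trace).re) := by
  set f : n → ℝ := fun i => η / ((hH.eigenvalues i - E) ^ 2 + η ^ 2)
  have hf : ∀ i, 0 ≤ f i := fun i => by positivity
  have hnot_eigenvalue : ∀ i, (hH.eigenvalues i : ℂ) ≠ E + η * I := fun i h =>
    hη.ne (by simpa using congrArg im h)
  have hImR_diag : ImR = Unitary.conjStarAlgAut ℂ _ hH.eigenvectorUnitary
      (diagonal fun i => (f i : ℂ)) := by
    rw [hImR, hR, hH.inv_sub_smul_one hnot_eigenvalue, ← conjStarAlgAut_diagonal_ofReal_im]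
    congr
    funext i
    exact congrArg ofReal (im_inv_ofReal_sub _ E η)
  have htrace : ImR.trace.re = ∑ i, f i := by
    rw [hImR_diag, trace_conjStarAlgAut, trace_diagonal, ← ofReal_sum, ofReal_re]
  have htrace_sq : (ImR * ImR).trace.re = ∑ i, f i ^ 2 := by
    rw [hImR_diag, ← map_mul, diagonal_mul_diagonal, trace_conjStarAlgAut, trace_diagonal]
    simp only [← ofReal_mul, ← ofReal_sum, ofReal_re, sq]
  rw [hN, htrace, htrace_sq]
  refine Finset.card_sq_sub_card_le_sq_sum_sub_sum_sq (Finset.subset_univ _)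
    (fun i _ => hf i) fun i hi => ?_
  obtain ⟨hlo, hhi⟩ := (Finset.mem_filter.mp hi).2
  rw [mul_div_assoc', le_div_iff₀ (by positivity)]
  nlinarith
end

section
/- Let H be a self-adjoint operator on a Hilbert space, E ∈ ℝ, and ε > 0. Suppose V is a two-dimensional subspace such that ‖(H − E)ψ‖ ≤ 2ε‖ψ‖ for all ψ ∈ V. Then the spectral projection P = χ_{[E−3ε, E+3ε]}(H) satisfies ‖Pψ‖² ≥ (5/9)‖ψ‖² for all ψ ∈ V; consequently P is injective on V and tr P ≥ 2 (i.e., the range of P has dimension at least 2). -/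
/-!
Write `A = H - E` and `Q = 1 - P`. Since `A` commutes with the orthogonal projection `Q`, for `ψ ∈ V`
the spectral gap on the range of `Q` gives `3ε ‖Qψ‖ ≤ ‖A Qψ‖ = ‖Q Aψ‖ ≤ ‖Aψ‖ ≤ 2ε ‖ψ‖`, so
`‖Qψ‖² ≤ (4/9) ‖ψ‖²` and, by Pythagoras, `‖Pψ‖² ≥ (5/9) ‖ψ‖²`. Hence `P` does not vanish on
`V ∖ {0}`, so it maps `V` injectively into its range, whose dimension is therefore at least 2.
-/

open scoped InnerProductSpace

universe u

namespace IsStarProjection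

variable {𝕜 E : Type*} [RCLike 𝕜] [NormedAddCommGroup E] [InnerProductSpace 𝕜 E]
  [CompleteSpace E] {P : E →L[𝕜] E}

theorem inner_apply_sub_apply_eq_zero (hP : IsStarProjection P) (x : E) :
    ⟪P x, x - P x⟫_𝕜 = 0 := by
  have hPP : P (P x) = P x := congr($(hP.isIdempotentElem.eq) x)
  rw [← ContinuousLinearMap.adjoint_inner_right, ← ContinuousLinearMap.star_eq_adjoint,
    hP.isSelfAdjoint.star_eq, map_sub, hPP, sub_self, inner_zero_right]

theorem norm_sq_apply_add_norm_sq_sub_apply (hP : IsStarProjection P) (x : E) :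
    ‖P x‖ ^ 2 + ‖x - P x‖ ^ 2 = ‖x‖ ^ 2 := by
  have h := norm_add_sq_eq_norm_sq_add_norm_sq_of_inner_eq_zero _ _
    (hP.inner_apply_sub_apply_eq_zero x)
  rw [add_sub_cancel] at h
  simp only [sq, h]

theorem norm_sub_apply_le (hP : IsStarProjection P) (x : E) : ‖x - P x‖ ≤ ‖x‖ := by
  refine le_of_sq_le_sq ?_ (norm_nonneg x)
  linarith [hP.norm_sq_apply_add_norm_sq_sub_apply x, sq_nonneg ‖P x‖]

theorem mul_norm_sub_apply_le_of_commute (hP : IsStarProjection P) {A : E →L[𝕜] E}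
    (hAP : Commute A P) {a b : ℝ} {x : E} (hgap : a * ‖x - P x‖ ≤ ‖A (x - P x)‖)
    (hx : ‖A x‖ ≤ b * ‖x‖) : a * ‖x - P x‖ ≤ b * ‖x‖ :=
  have hApply : A (x - P x) = A x - P (A x) := by
    rw [map_sub, show A (P x) = P (A x) from congr($(hAP.eq) x)]
  calc a * ‖x - P x‖ ≤ ‖A x - P (A x)‖ := hApply ▸ hgap
    _ ≤ ‖A x‖ := hP.norm_sub_apply_le (A x)
    _ ≤ b * ‖x‖ := hx

theorem mul_norm_sq_le_norm_sq_apply (hP : IsStarProjection P) {c : ℝ} {x : E}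
    (hx : ‖x - P x‖ ≤ c * ‖x‖) : (1 - c ^ 2) * ‖x‖ ^ 2 ≤ ‖P x‖ ^ 2 := by
  have hsq : ‖x - P x‖ ^ 2 ≤ c ^ 2 * ‖x‖ ^ 2 := by
    rw [← mul_pow]; exact pow_le_pow_left₀ (norm_nonneg _) hx 2
  linarith [hP.norm_sq_apply_add_norm_sq_sub_apply x]

end IsStarProjection

theorem LinearMap.rank_le_rank_range_of_injOn {R : Type*} {M N : Type u} [Ring R]
    [AddCommGroup M] [Module R M] [AddCommGroup N] [Module R N] (f : M →ₗ[R] N) {V : Submodule R M}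
    (hf : Set.InjOn f V) : Module.rank R V ≤ Module.rank R (LinearMap.range f) :=
  LinearMap.rank_le_of_injective
    ((f ∘ₗ V.subtype).codRestrict (LinearMap.range f) fun _ ↦ LinearMap.mem_range_self f _)
    fun a b hab ↦ Subtype.ext (hf a.2 b.2 (congrArg Subtype.val hab))

theorem injOn_of_mul_norm_sq_le_norm_sq_apply {R E F : Type*} [Ring R]
    [NormedAddCommGroup E] [Module R E] [NormedAddCommGroup F] [Module R F]
    (f : E →ₗ[R] F) {V : Submodule R E} {c : ℝ} (hc : 0 < c)
    (hf : ∀ x ∈ V, c * ‖x‖ ^ 2 ≤ ‖f x‖ ^ 2) : Set.InjOn f V := by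
  refine (LinearMap.disjoint_ker_iff_injOn (f := f) (p := V)).mp ?_
  refine LinearMap.disjoint_ker.mpr fun x hxV hfx ↦ ?_
  have h := hf x hxV
  rw [hfx, norm_zero, zero_pow two_ne_zero] at h
  exact norm_eq_zero.mp (pow_eq_zero_iff two_ne_zero |>.mp
    (le_antisymm (nonpos_of_mul_nonpos_right h hc) (sq_nonneg _)))

theorem stmt_5_general {𝓗 : Type*} [NormedAddCommGroup 𝓗] [InnerProductSpace ℂ 𝓗] [CompleteSpace 𝓗]
    (H : 𝓗 →L[ℂ] 𝓗) (E ε : ℝ) (hε : 0 < ε)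
    (P : 𝓗 →L[ℂ] 𝓗) (hPsa : IsSelfAdjoint P) (hPidem : P ∘L P = P)
    (hcomm : H ∘L P = P ∘L H)
    (hker : ∀ ψ : 𝓗, 3 * ε * ‖ψ - P ψ‖ ≤ ‖H (ψ - P ψ) - (E : ℂ) • (ψ - P ψ)‖)
    (V : Submodule ℂ 𝓗) (hV : Module.rank ℂ V = 2)
    (hVest : ∀ ψ ∈ V, ‖H ψ - (E : ℂ) • ψ‖ ≤ 2 * ε * ‖ψ‖) :
    (∀ ψ ∈ V, (5 / 9 : ℝ) * ‖ψ‖ ^ 2 ≤ ‖P ψ‖ ^ 2) ∧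
      Set.InjOn P (V : Set 𝓗) ∧
      2 ≤ Module.rank ℂ (LinearMap.range (P : 𝓗 →ₗ[ℂ] 𝓗)) := by
  have hP : IsStarProjection P := ⟨hPidem, hPsa⟩
  have hAP : Commute (H - (E : ℂ) • 1) P := by
    rw [commute_iff_eq, sub_mul, mul_sub, smul_mul_assoc, mul_smul_comm, one_mul, mul_one]
    exact congrArg (· - _) hcomm
  have hbound : ∀ ψ ∈ V, (5 / 9 : ℝ) * ‖ψ‖ ^ 2 ≤ ‖P ψ‖ ^ 2 := fun ψ hψ ↦ by
    have hgap : 3 * ε * ‖ψ - P ψ‖ ≤ 2 * ε * ‖ψ‖ :=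
      hP.mul_norm_sub_apply_le_of_commute hAP (hker ψ) (hVest ψ hψ)
    have hQψ : ‖ψ - P ψ‖ ≤ 2 / 3 * ‖ψ‖ := by nlinarith [norm_nonneg ψ]
    convert hP.mul_norm_sq_le_norm_sq_apply hQψ using 1
    norm_num
  have hinj : Set.InjOn P V :=
    injOn_of_mul_norm_sq_le_norm_sq_apply (P : 𝓗 →ₗ[ℂ] 𝓗) (by norm_num) hbound
  exact ⟨hbound, hinj, hV ▸ LinearMap.rank_le_rank_range_of_injOn _ hinj⟩

/-- `H` self-adjoint on a Hilbert space, `P = χ_{[E-3ε,E+3ε]}(H)` the spectral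
projection (characterized here by: `P` is an orthogonal projection commuting with `H`, on its
range `‖(H-E)ψ‖ ≤ 3ε‖ψ‖`, and on the range of `I - P` one has `‖(H-E)ψ‖ ≥ 3ε‖ψ‖`).
If `V` is a two-dimensional subspace with `‖(H-E)ψ‖ ≤ 2ε‖ψ‖` on `V`, then
`‖Pψ‖² ≥ (5/9)‖ψ‖²` on `V`, `P` is injective on `V`, and `tr P = rank P ≥ 2`. -/
theorem stmt_5 {𝓗 : Type*} [NormedAddCommGroup 𝓗] [InnerProductSpace ℂ 𝓗] [CompleteSpace 𝓗]
    (H : 𝓗 →L[ℂ] 𝓗) (hH : IsSelfAdjoint H) (E ε : ℝ) (hε : 0 < ε)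
    (P : 𝓗 →L[ℂ] 𝓗) (hPsa : IsSelfAdjoint P) (hPidem : P ∘L P = P)
    (hcomm : H ∘L P = P ∘L H)
    (hran : ∀ ψ : 𝓗, ‖H (P ψ) - (E : ℂ) • P ψ‖ ≤ 3 * ε * ‖P ψ‖)
    (hker : ∀ ψ : 𝓗, 3 * ε * ‖ψ - P ψ‖ ≤ ‖H (ψ - P ψ) - (E : ℂ) • (ψ - P ψ)‖)
    (V : Submodule ℂ 𝓗) (hV : Module.rank ℂ V = 2)
    (hVest : ∀ ψ ∈ V, ‖H ψ - (E : ℂ) • ψ‖ ≤ 2 * ε * ‖ψ‖) :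
    (∀ ψ ∈ V, (5 / 9 : ℝ) * ‖ψ‖ ^ 2 ≤ ‖P ψ‖ ^ 2) ∧
      Set.InjOn P (V : Set 𝓗) ∧
      2 ≤ Module.rank ℂ (LinearMap.range (P : 𝓗 →ₗ[ℂ] 𝓗)) :=
  stmt_5_general H E ε hε P hPsa hPidem hcomm hker V hV hVest
end

section
/- Suppose for each scale L ≥ 1 and each interval J we have P{ tr χ_J(H_{ω,L}) ≥ 2 } ≤ K |J|² L^{2d}, where K is a constant. Fix a bounded interval I and q > 2d, and let 𝓔_{L,I,q} be the event that tr χ_J(H_{ω,L}) ≤ 1 for every subinterval J ⊆ I with |J| ≤ L^{−q}. Then P{𝓔_{L,I,q}} ≥ 1 − 8K(|I| + 1) L^{−q + 2d}. -/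
open MeasureTheory
open scoped Classical

/-- given the Minami-type bound
`P{tr χ_J(H_{ω,L}) ≥ 2} ≤ K |J|² L^{2d}` for all intervals `J` and scales `L ≥ 1`,
for a bounded interval `I = [a,b]` and `q > 2d` the event `𝓔_{L,I,q}` that
`tr χ_J(H_{ω,L}) ≤ 1` for every subinterval `J ⊆ I` with `|J| ≤ L^{-q}` has
probability at least `1 - 8K(|I|+1)L^{-q+2d}`.  Here `tr χ_J(H_{ω,L})` is modelled
as the number of eigenvalues (with multiplicity) of `H_{ω,L}` lying in `J`, the
eigenvalues being given by `Ev L ω : Fin (m L) → ℝ`. -/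
theorem stmt_12 {Ω : Type*} [MeasurableSpace Ω] (μ : Measure Ω) [IsProbabilityMeasure μ]
    (d : ℕ) (K : ℝ) (m : ℝ → ℕ) (Ev : ∀ L : ℝ, Ω → Fin (m L) → ℝ)
    (hMinami : ∀ L : ℝ, 1 ≤ L → ∀ u v : ℝ, u ≤ v →
      (μ {ω | 2 ≤ (Finset.univ.filter fun i => Ev L ω i ∈ Set.Icc u v).card}).toReal ≤
        K * (v - u) ^ 2 * L ^ (2 * (d : ℝ)))
    (a b q : ℝ) (hab : a ≤ b) (hq : 2 * (d : ℝ) < q) :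
    ∀ L : ℝ, 1 ≤ L →
      1 - 8 * K * ((b - a) + 1) * L ^ (-q + 2 * (d : ℝ)) ≤
        (μ {ω | ∀ u v : ℝ, a ≤ u → u ≤ v → v ≤ b → v - u ≤ L ^ (-q) →
          (Finset.univ.filter fun i => Ev L ω i ∈ Set.Icc u v).card ≤ 1}).toReal := by
  intro L hL
  have hL0 : (0:ℝ) < L := lt_of_lt_of_le one_pos hL
  set ε : ℝ := L ^ (-q) with hεdef
  have hε0 : 0 < ε := Real.rpow_pos_of_pos hL0 _
  have hK : 0 ≤ K := by
    have h := hMinami 1 le_rfl 0 1 (by norm_num)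
    have h0 : (0:ℝ) ≤ (μ {ω | 2 ≤ (Finset.univ.filter fun i => Ev 1 ω i ∈ Set.Icc (0:ℝ) 1).card}).toReal :=
      ENNReal.toReal_nonneg
    rw [Real.one_rpow] at h
    nlinarith
  set N : ℕ := ⌈(b - a) * L ^ q⌉₊ with hNdef
  set Bad : ℕ → Set Ω := fun k =>
    {ω | 2 ≤ (Finset.univ.filter fun i => Ev L ω i ∈ Set.Icc (a + k*ε) (a + (k+2)*ε)).card}
    with hBad
  set G : Set Ω := {ω | ∀ u v : ℝ, a ≤ u → u ≤ v → v ≤ b → v - u ≤ L ^ (-q) →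
          (Finset.univ.filter fun i => Ev L ω i ∈ Set.Icc u v).card ≤ 1} with hG
  have hqpos : 0 < q := lt_of_le_of_lt (by positivity) hq
  have hLq1 : (1:ℝ) ≤ L ^ q := Real.one_le_rpow hL hqpos.le
  have hεinv : ε * L ^ q = 1 := by
    rw [hεdef, ← Real.rpow_add hL0]
    simp
  have hcover : Gᶜ ⊆ ⋃ k ∈ Finset.range (N+1), Bad k := by
    intro ω hω
    simp only [hG, Set.mem_compl_iff, Set.mem_setOf_eq, not_forall] at hω
    obtain ⟨u, v, hau, huv, hvb, hsmall, hcard⟩ := hω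
    push_neg at hcard
    set k : ℕ := ⌊(u - a) / ε⌋₊ with hk
    have hua : 0 ≤ u - a := sub_nonneg.2 hau
    have hfl : (k:ℝ) ≤ (u - a) / ε := Nat.floor_le (div_nonneg hua hε0.le)
    have hk1 : a + k * ε ≤ u := by
      have := (div_le_div_iff_of_pos_right hε0).mpr hfl
      have h2 : (k:ℝ) * ε ≤ u - a := by
        calc (k:ℝ) * ε ≤ ((u-a)/ε) * ε := by nlinarith
          _ = u - a := by field_simp
      linarith
    have hk2 : v ≤ a + ((k:ℝ)+2)*ε := by
      have h2 : (u - a)/ε < (k:ℝ) + 1 := Nat.lt_floor_add_one _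
      have h3 : u - a < ((k:ℝ)+1)*ε := by
        have := (div_lt_iff₀ hε0).mp h2
        linarith
      have hsm : v - u ≤ ε := hsmall
      nlinarith
    have hkN : k ≤ N := by
      have h1 : (u - a)/ε ≤ (b - a) * L ^ q := by
        rw [div_le_iff₀ hε0]
        calc u - a ≤ b - a := by linarith
          _ = (b-a) * (ε * L ^ q) := by rw [hεinv]; ring
          _ = (b - a) * L ^ q * ε := by ring
      have h2 : (k:ℝ) ≤ (N:ℝ) := le_trans hfl (le_trans h1 (Nat.le_ceil _))
      exact_mod_cast h2
    refine Set.mem_biUnion (Finset.mem_range.mpr (Nat.lt_succ_of_le hkN)) ?_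
    simp only [hBad, Set.mem_setOf_eq]
    refine le_trans hcard (Finset.card_le_card ?_)
    intro i hi
    simp only [Finset.mem_filter, Finset.mem_univ, true_and, Set.mem_Icc] at hi ⊢
    constructor <;> [linarith [hi.1]; linarith [hi.2]]
  have hsum : (μ Gᶜ).toReal ≤ (N+1 : ℝ) * (4 * K * ε^2 * L ^ (2*(d:ℝ))) := by
    have hle : μ Gᶜ ≤ ∑ k ∈ Finset.range (N+1), μ (Bad k) :=
      le_trans (measure_mono hcover) (measure_biUnion_finset_le _ _)
    have hfin : ∀ k ∈ Finset.range (N+1), μ (Bad k) ≠ ⊤ := fun k _ => measure_ne_top μ _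
    have : (μ Gᶜ).toReal ≤ ∑ k ∈ Finset.range (N+1), (μ (Bad k)).toReal := by
      rw [← ENNReal.toReal_sum hfin]
      exact ENNReal.toReal_mono (by simp [ENNReal.sum_eq_top]) hle
    refine le_trans this ?_
    have hterm : ∀ k ∈ Finset.range (N+1),
        (μ (Bad k)).toReal ≤ 4 * K * ε^2 * L ^ (2*(d:ℝ)) := by
      intro k _
      have h := hMinami L hL (a + k*ε) (a + ((k:ℝ)+2)*ε) (by nlinarith)
      have heq : a + ((k:ℝ)+2)*ε - (a + (k:ℝ)*ε) = 2*ε := by ring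
      rw [heq] at h
      calc (μ (Bad k)).toReal ≤ K * (2*ε)^2 * L ^ (2*(d:ℝ)) := h
        _ = 4 * K * ε^2 * L ^ (2*(d:ℝ)) := by ring
    calc ∑ k ∈ Finset.range (N+1), (μ (Bad k)).toReal
        ≤ ∑ k ∈ Finset.range (N+1), (4 * K * ε^2 * L ^ (2*(d:ℝ))) :=
          Finset.sum_le_sum hterm
      _ = (N+1 : ℝ) * (4 * K * ε^2 * L ^ (2*(d:ℝ))) := by
          rw [Finset.sum_const, Finset.card_range]; push_cast; ring
  have h1 : 1 ≤ (μ G).toReal + (μ Gᶜ).toReal := by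
    have hu := measure_union_le (μ := μ) G Gᶜ
    rw [Set.union_compl_self, measure_univ] at hu
    have := ENNReal.toReal_mono
      (by simp [ENNReal.add_eq_top, measure_ne_top]) hu
    rw [ENNReal.toReal_add (measure_ne_top μ _) (measure_ne_top μ _)] at this
    simpa using this
  -- arithmetic
  have hceil : (N:ℝ) ≤ (b - a) * L ^ q + 1 :=
    (Nat.ceil_lt_add_one (mul_nonneg (sub_nonneg.2 hab) (le_trans zero_le_one hLq1))).le
  have hpow1 : ε^2 * L ^ (2*(d:ℝ)) = L ^ (-q + -q + 2*(d:ℝ)) := by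
    rw [hεdef, ← Real.rpow_natCast (L ^ (-q)) 2, ← Real.rpow_mul hL0.le,
      ← Real.rpow_add hL0]
    congr 1
    push_cast
    ring
  have hpow2 : L ^ q * L ^ (-q + -q + 2*(d:ℝ)) = L ^ (-q + 2*(d:ℝ)) := by
    rw [← Real.rpow_add hL0]; ring_nf
  have hCnonneg : 0 ≤ 4 * K * ε^2 * L ^ (2*(d:ℝ)) := by positivity
  have hN2 : ((N:ℝ)+1) ≤ 2 * ((b-a)+1) * L ^ q := by
    nlinarith [mul_nonneg (sub_nonneg.2 hab) (le_trans zero_le_one hLq1)]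
  have hmain : ((N:ℝ)+1) * (4 * K * ε^2 * L ^ (2*(d:ℝ)))
      ≤ 8 * K * ((b - a) + 1) * L ^ (-q + 2*(d:ℝ)) := by
    calc ((N:ℝ)+1) * (4 * K * ε^2 * L ^ (2*(d:ℝ)))
        ≤ (2 * ((b-a)+1) * L ^ q) * (4 * K * ε^2 * L ^ (2*(d:ℝ))) :=
          mul_le_mul_of_nonneg_right hN2 hCnonneg
      _ = 8 * K * ((b - a) + 1) * (L ^ q * (ε^2 * L ^ (2*(d:ℝ)))) := by ring
      _ = 8 * K * ((b - a) + 1) * L ^ (-q + 2*(d:ℝ)) := by rw [hpow1, hpow2]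
  have : (μ Gᶜ).toReal ≤ 8 * K * ((b - a) + 1) * L ^ (-q + 2*(d:ℝ)) :=
    le_trans hsum hmain
  linarith
end
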